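/- arXiv:2102.08600 — 2 statements merged into one kernel-verified Lean document; each statement's English description precedes it below -/
import Mathlib

section
/- Under the stated assumptions, the spectrum of the exact TLHB iteration matrix E_TL is exactly {0 (with multiplicity n_c), 1 − ν_1, …, 1 − ν_{n−n_c}}, where ν_1, …, ν_{n−n_c} are the positive eigenvalues (counted with multiplicity) of M̃_s^{-1} S^T A (I − Π_A) S. -/
open Matrix

/-- Smallest eigenvalue (real spectrum). -/
noncomputable def lamMin {n : ℕ} (M : Matrix (Fin n) (Fin n) ℝ) : ℝ :=
  sInf (spectrum ℝ M)

/-- Largest eigenvalue (real spectrum). -/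
noncomputable def lamMax {n : ℕ} (M : Matrix (Fin n) (Fin n) ℝ) : ℝ :=
  sSup (spectrum ℝ M)

/-- Smallest positive eigenvalue (real spectrum). -/
noncomputable def lamMinPos {n : ℕ} (M : Matrix (Fin n) (Fin n) ℝ) : ℝ :=
  sInf {t : ℝ | t ∈ spectrum ℝ M ∧ 0 < t}

/-- Energy norm of a vector induced by an SPD matrix `A`. -/
noncomputable def eNorm {n : ℕ} (A : Matrix (Fin n) (Fin n) ℝ) (v : Fin n → ℝ) : ℝ :=
  Real.sqrt (v ⬝ᵥ A.mulVec v)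

/-- `A`-norm of a matrix `B`: `‖B‖_A = sup_{v ≠ 0} ‖Bv‖_A / ‖v‖_A`. -/
noncomputable def aNorm {n : ℕ} (A B : Matrix (Fin n) (Fin n) ℝ) : ℝ :=
  sSup {r : ℝ | ∃ v : Fin n → ℝ, v ≠ 0 ∧ r = eNorm A (B.mulVec v) / eNorm A v}

/-- The `A`-orthogonal projection `Π_A = P (Pᵀ A P)⁻¹ Pᵀ A`. -/
noncomputable def proj {n nc : ℕ} (A : Matrix (Fin n) (Fin n) ℝ)
    (P : Matrix (Fin n) (Fin nc) ℝ) : Matrix (Fin n) (Fin n) ℝ :=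
  P * (Pᵀ * A * P)⁻¹ * Pᵀ * A

/-- `M̃_s = Msᵀ (Ms + Msᵀ - As)⁻¹ Ms`. -/
noncomputable def tMs {ns : ℕ} (Ms As : Matrix (Fin ns) (Fin ns) ℝ) :
    Matrix (Fin ns) (Fin ns) ℝ :=
  Msᵀ * (Ms + Msᵀ - As)⁻¹ * Ms

/-- `S M̃_s⁻¹ Sᵀ A`. -/
noncomputable def smoothX {n ns : ℕ} (A : Matrix (Fin n) (Fin n) ℝ)
    (S : Matrix (Fin n) (Fin ns) ℝ) (Ms : Matrix (Fin ns) (Fin ns) ℝ) :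
    Matrix (Fin n) (Fin n) ℝ :=
  S * (tMs Ms (Sᵀ * A * S))⁻¹ * Sᵀ * A

/-- `σ_TL = λ_min⁺( S M̃_s⁻¹ Sᵀ A (I - Π_A) )`. -/
noncomputable def sigmaTL {n ns nc : ℕ} (A : Matrix (Fin n) (Fin n) ℝ)
    (S : Matrix (Fin n) (Fin ns) ℝ) (P : Matrix (Fin n) (Fin nc) ℝ)
    (Ms : Matrix (Fin ns) (Fin ns) ℝ) : ℝ :=
  lamMinPos (smoothX A S Ms * (1 - proj A P))

/-- Exact TLHB iteration matrix. -/
noncomputable def Etl {n ns nc : ℕ} (A : Matrix (Fin n) (Fin n) ℝ)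
    (S : Matrix (Fin n) (Fin ns) ℝ) (P : Matrix (Fin n) (Fin nc) ℝ)
    (Ms : Matrix (Fin ns) (Fin ns) ℝ) : Matrix (Fin n) (Fin n) ℝ :=
  (1 - S * (Msᵀ)⁻¹ * Sᵀ * A) * (1 - proj A P) * (1 - S * Ms⁻¹ * Sᵀ * A)

/-- Inexact TLHB iteration matrix with coarse solver `Bc`. -/
noncomputable def EtlIn {n ns nc : ℕ} (A : Matrix (Fin n) (Fin n) ℝ)
    (S : Matrix (Fin n) (Fin ns) ℝ) (P : Matrix (Fin n) (Fin nc) ℝ)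
    (Ms : Matrix (Fin ns) (Fin ns) ℝ) (Bc : Matrix (Fin nc) (Fin nc) ℝ) :
    Matrix (Fin n) (Fin n) ℝ :=
  (1 - S * (Msᵀ)⁻¹ * Sᵀ * A) * (1 - P * Bc⁻¹ * Pᵀ * A) * (1 - S * Ms⁻¹ * Sᵀ * A)

open Polynomial

/-!
Cyclically permuting the three factors of `E_TL` and merging the two smoothing sweeps into
`I - X`, `X = S M̃_s⁻¹ Sᵀ A`, shows that `E_TL` has the characteristic polynomial of `I - Z` with
`Z = Π_A + X (I - Π_A)`. Now `Z = (P S) G` for `G = ((Pᵀ A P)⁻¹ Pᵀ A ; M̃_s⁻¹ Sᵀ A (I - Π_A))`, and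
`G (P S)` is block upper triangular with diagonal blocks `I` and `Y = M̃_s⁻¹ Sᵀ A (I - Π_A) S`.
Hence `Z` has the eigenvalue `1` with multiplicity `n_c`, and otherwise the nonzero eigenvalues of
`Y`. Conjugating by a square root of `M̃_s⁻¹` makes `Y` similar to a positive semidefinite matrix of
rank `rank ((I - Π_A) S) = n - n_c`, so these are exactly the positive eigenvalues of `Y`, and
there are `n - n_c` of them.
-/

namespace Matrix

section Field

variable {K : Type*} [Field K] {k l m n : Type*}

theorem mulVec_injective_of_rank_eq_card [Fintype l] (B : Matrix m l K)
    (hB : B.rank = Fintype.card l) : Function.Injective B.mulVec := by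
  have hker : Module.finrank K (LinearMap.ker B.mulVecLin) = 0 := by
    have := B.mulVecLin.finrank_range_add_finrank_ker
    rw [Module.finrank_fintype_fun_eq_card] at this
    unfold rank at hB
    omega
  rw [← coe_mulVecLin, ← LinearMap.ker_eq_bot, ← Submodule.finrank_eq_zero, hker]

theorem rank_mul_eq_left_of_rank_eq_card [Fintype l] [Fintype m] [Fintype k] (E : Matrix k m K)
    (M : Matrix m l K) (hM : M.rank = Fintype.card m) : (E * M).rank = E.rank := by
  have htop : LinearMap.range M.mulVecLin = ⊤ :=
    Submodule.eq_top_of_finrank_eq (by rw [Module.finrank_fintype_fun_eq_card]; exact hM)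
  rw [rank, rank, mulVecLin_mul, LinearMap.range_comp, htop, Submodule.map_top]

theorem rank_fromCols_zero [Fintype l] [DecidableEq l] [Fintype n] (B : Matrix m l K) :
    (fromCols B (0 : Matrix m n K)).rank = B.rank := by
  refine le_antisymm ?_ ?_
  · simpa [mul_fromCols] using rank_mul_le_left B (fromCols (1 : Matrix l l K) (0 : Matrix l n K))
  · simpa [fromCols_mul_fromRows] using
      rank_mul_le_left (fromCols B (0 : Matrix m n K)) (fromRows 1 (0 : Matrix n l K))

theorem rank_one_sub_add_rank_of_isIdempotentElem [Fintype m] [DecidableEq m] {Q : Matrix m m K}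
    (hQ : IsIdempotentElem Q) : (1 - Q).rank + Q.rank = Fintype.card m := by
  have hker : LinearMap.ker (1 - Q).mulVecLin = LinearMap.range Q.mulVecLin := by
    have := LinearMap.IsIdempotentElem.range_eq_ker_one_sub
      (hQ.map (toLinAlgEquiv' (R := K) (n := m)))
    rw [← map_one (toLinAlgEquiv' (R := K) (n := m)), ← map_sub] at this
    exact this.symm
  have := (1 - Q).mulVecLin.finrank_range_add_finrank_ker
  rwa [Module.finrank_fintype_fun_eq_card, hker] at this

theorem charpoly_one_sub [Infinite K] [Fintype n] [DecidableEq n] (M : Matrix n n K) :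
    (1 - M).charpoly = C ((-1) ^ Fintype.card n) * M.charpoly.comp (C (-1) * X + C 1) := by
  refine Polynomial.funext fun x => ?_
  rw [eval_mul, eval_C, eval_comp, eval_charpoly, eval_charpoly, ← det_neg]
  congr 1
  rw [show eval x (C (-1) * X + C 1) = -x + 1 by simp, map_add, map_neg, map_one]
  abel

theorem roots_charpoly_one_sub [Infinite K] [Fintype n] [DecidableEq n] (M : Matrix n n K) :
    (1 - M).charpoly.roots = M.charpoly.roots.map (1 - ·) := by
  rw [charpoly_one_sub, roots_C_mul _ (pow_ne_zero _ (neg_ne_zero.mpr one_ne_zero)),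
    roots_comp_C_mul_X_add_C _ _ _ isUnit_neg_one]
  simp

end Field

section RCLike

variable {𝕜 : Type*} [RCLike 𝕜] {m n : Type*} [Fintype n] [DecidableEq n]

open scoped ComplexOrder

theorem PosDef.exists_isUnit_det_eq_conjTranspose_mul_self {B : Matrix n n 𝕜} (hB : B.PosDef) :
    ∃ y : Matrix n n 𝕜, IsUnit y.det ∧ B = yᴴ * y := by
  open scoped MatrixOrder in
  obtain ⟨y, rfl⟩ := CStarAlgebra.nonneg_iff_eq_star_mul_self.mp hB.posSemidef.nonneg
  refine ⟨y, ?_, rfl⟩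
  have := (isUnit_iff_isUnit_det _).mp hB.isUnit
  rw [det_mul] at this
  exact isUnit_of_mul_isUnit_right this

theorem PosDef.rank_conjTranspose_mul_mul_same [Fintype m] {A : Matrix n n 𝕜} (hA : A.PosDef)
    (T : Matrix n m 𝕜) : (Tᴴ * A * T).rank = T.rank := by
  obtain ⟨y, hy, rfl⟩ := hA.exists_isUnit_det_eq_conjTranspose_mul_self
  rw [show Tᴴ * (yᴴ * y) * T = (y * T)ᴴ * (y * T) by simp [Matrix.mul_assoc],
    rank_conjTranspose_mul_self, rank_mul_eq_right_of_isUnit_det _ _ hy]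

theorem PosDef.exists_posSemidef_charpoly_mul_eq {B M : Matrix n n 𝕜} (hB : B.PosDef)
    (hM : M.PosSemidef) :
    ∃ H : Matrix n n 𝕜, H.PosSemidef ∧ H.rank = M.rank ∧ (B * M).charpoly = H.charpoly := by
  obtain ⟨y, hy, rfl⟩ := hB.exists_isUnit_det_eq_conjTranspose_mul_self
  have hyH : IsUnit yᴴ.det := by rw [det_conjTranspose]; exact hy.star
  refine ⟨y * M * yᴴ, hM.mul_mul_conjTranspose_same y, ?_, ?_⟩
  · rw [rank_mul_eq_left_of_isUnit_det _ _ hyH, rank_mul_eq_right_of_isUnit_det _ _ hy]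
  · rw [Matrix.mul_assoc, charpoly_mul_comm, Matrix.mul_assoc]

end RCLike

section Real

variable {m n : Type*} [Fintype n]

theorem PosDef.transpose_mul_mul_same [Fintype m] {A : Matrix n n ℝ} (hA : A.PosDef)
    {B : Matrix n m ℝ} (hB : Function.Injective B.mulVec) : (Bᵀ * A * B).PosDef := by
  simpa only [conjTranspose_eq_transpose_of_trivial] using hA.conjTranspose_mul_mul_same hB

variable [DecidableEq n]

theorem PosSemidef.filter_not_pos_roots_charpoly {H : Matrix n n ℝ} (hH : H.PosSemidef) :
    H.charpoly.roots.filter (¬ 0 < ·) = Multiset.replicate (Fintype.card n - H.rank) 0 := by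
  have hzero (i : n) : ¬ 0 < hH.1.eigenvalues i ↔ hH.1.eigenvalues i = 0 :=
    ⟨fun h => le_antisymm (not_lt.mp h) (hH.eigenvalues_nonneg i), fun h => h.le.not_gt⟩
  have hroots : H.charpoly.roots = Finset.univ.val.map hH.1.eigenvalues := by
    simpa using hH.1.roots_charpoly_eq_eigenvalues
  rw [Multiset.eq_replicate, hroots, Multiset.filter_map, Multiset.card_map]
  simp only [Function.comp_def, hzero]
  refine ⟨?_, ?_⟩
  · rw [hH.1.rank_eq_card_non_zero_eigs, Fintype.card_subtype_compl, Fintype.card_subtype]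
    change (Finset.univ.filter fun i => hH.1.eigenvalues i = 0).card = _
    have := Finset.card_le_univ {i | hH.1.eigenvalues i = 0}
    omega
  · simp only [Multiset.mem_map, Multiset.mem_filter]
    rintro x ⟨i, ⟨-, hi⟩, rfl⟩
    exact hi

theorem PosSemidef.charpoly_eq_X_pow_mul_prod_pos_roots {H : Matrix n n ℝ} (hH : H.PosSemidef) :
    H.charpoly = X ^ (Fintype.card n - H.rank) *
      ((H.charpoly.roots.filter (0 < ·)).map (X - C ·)).prod := by
  have hsplit : H.charpoly = (H.charpoly.roots.map (X - C ·)).prod :=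
    (prod_multiset_X_sub_C_of_monic_of_roots_card_eq (charpoly_monic H) (by
      simp [hH.1.roots_charpoly_eq_eigenvalues, charpoly_natDegree_eq_dim])).symm
  conv_lhs => rw [hsplit, ← Multiset.filter_add_not (0 < ·) H.charpoly.roots]
  rw [Multiset.map_add, Multiset.prod_add, hH.filter_not_pos_roots_charpoly,
    Multiset.map_replicate, Multiset.prod_replicate, map_zero, sub_zero, mul_comm]

end Real

end Matrix

section TwoLevel

variable {n nc ns : ℕ} {A : Matrix (Fin n) (Fin n) ℝ} {P : Matrix (Fin n) (Fin nc) ℝ}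

theorem proj_eq_mul (A : Matrix (Fin n) (Fin n) ℝ) (P : Matrix (Fin n) (Fin nc) ℝ) :
    proj A P = P * ((Pᵀ * A * P)⁻¹ * (Pᵀ * A)) := by
  simp only [proj, Matrix.mul_assoc]

theorem proj_mul_self (hAc : IsUnit (Pᵀ * A * P).det) : proj A P * P = P := by
  rw [proj_eq_mul, Matrix.mul_assoc, Matrix.mul_assoc, nonsing_inv_mul _ hAc, Matrix.mul_one]

theorem isIdempotentElem_proj (hAc : IsUnit (Pᵀ * A * P).det) : IsIdempotentElem (proj A P) := by
  rw [IsIdempotentElem]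
  nth_rw 2 [proj_eq_mul]
  rw [← Matrix.mul_assoc, proj_mul_self hAc, ← proj_eq_mul]

theorem one_sub_proj_mul_self (hAc : IsUnit (Pᵀ * A * P).det) : (1 - proj A P) * P = 0 := by
  rw [Matrix.sub_mul, Matrix.one_mul, proj_mul_self hAc, sub_self]

theorem rank_proj (hAc : IsUnit (Pᵀ * A * P).det) (hP : P.rank = nc) : (proj A P).rank = nc := by
  refine le_antisymm ?_ ?_
  · calc (proj A P).rank ≤ P.rank := proj_eq_mul A P ▸ rank_mul_le_left _ _
      _ = nc := hP
  · calc nc = (proj A P * P).rank := by rw [proj_mul_self hAc, hP]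
      _ ≤ (proj A P).rank := rank_mul_le_left _ _

theorem transpose_one_sub_proj_mul (hA : Aᵀ = A) (P : Matrix (Fin n) (Fin nc) ℝ) :
    (1 - proj A P)ᵀ * A = A * (1 - proj A P) := by
  simp only [transpose_sub, transpose_one, Matrix.sub_mul, Matrix.mul_sub, proj,
    transpose_mul, transpose_nonsing_inv, hA, transpose_transpose, Matrix.mul_assoc,
    Matrix.one_mul, Matrix.mul_one]

theorem transpose_mul_one_sub_proj_mul_eq (hA : Aᵀ = A) (hAc : IsUnit (Pᵀ * A * P).det)
    (S : Matrix (Fin n) (Fin ns) ℝ) :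
    Sᵀ * A * (1 - proj A P) * S = ((1 - proj A P) * S)ᵀ * A * ((1 - proj A P) * S) := by
  calc Sᵀ * A * (1 - proj A P) * S = Sᵀ * ((1 - proj A P)ᵀ * A * (1 - proj A P)) * S := by
        rw [transpose_one_sub_proj_mul hA, Matrix.mul_assoc A,
          (isIdempotentElem_proj hAc).one_sub.eq, Matrix.mul_assoc Sᵀ]
    _ = _ := by simp only [transpose_mul, Matrix.mul_assoc]

theorem rank_one_sub_proj_mul (hAc : IsUnit (Pᵀ * A * P).det) (hP : P.rank = nc)
    {S : Matrix (Fin n) (Fin ns) ℝ} (hSP : (fromCols S P).rank = n) :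
    ((1 - proj A P) * S).rank = n - nc := by
  have hcompl := rank_one_sub_add_rank_of_isIdempotentElem (isIdempotentElem_proj hAc)
  rw [rank_proj hAc hP, Fintype.card_fin] at hcompl
  have h := rank_mul_eq_left_of_rank_eq_card (1 - proj A P) (fromCols S P)
    (by rw [hSP, Fintype.card_fin])
  rw [mul_fromCols, one_sub_proj_mul_self hAc, rank_fromCols_zero] at h
  omega

theorem posSemidef_transpose_mul_one_sub_proj_mul (hA : A.PosDef)
    (hAc : IsUnit (Pᵀ * A * P).det) (S : Matrix (Fin n) (Fin ns) ℝ) :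
    (Sᵀ * A * (1 - proj A P) * S).PosSemidef := by
  rw [transpose_mul_one_sub_proj_mul_eq (isHermitian_iff_isSymm.mp hA.isHermitian) hAc]
  simpa only [conjTranspose_eq_transpose_of_trivial] using
    hA.posSemidef.conjTranspose_mul_mul_same ((1 - proj A P) * S)

theorem rank_transpose_mul_one_sub_proj_mul (hA : A.PosDef) (hAc : IsUnit (Pᵀ * A * P).det)
    (hP : P.rank = nc) {S : Matrix (Fin n) (Fin ns) ℝ} (hSP : (fromCols S P).rank = n) :
    (Sᵀ * A * (1 - proj A P) * S).rank = n - nc := by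
  rw [transpose_mul_one_sub_proj_mul_eq (isHermitian_iff_isSymm.mp hA.isHermitian) hAc,
    ← conjTranspose_eq_transpose_of_trivial, hA.rank_conjTranspose_mul_mul_same,
    rank_one_sub_proj_mul hAc hP hSP]

theorem inv_tMs {Ms As : Matrix (Fin ns) (Fin ns) ℝ} (hMs : IsUnit Ms.det)
    (hW : IsUnit (Ms + Msᵀ - As).det) :
    (tMs Ms As)⁻¹ = (Msᵀ)⁻¹ + Ms⁻¹ - Ms⁻¹ * As * (Msᵀ)⁻¹ := by
  have hMsT : IsUnit Msᵀ.det := by rwa [det_transpose]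
  rw [tMs, Matrix.mul_inv_rev, Matrix.mul_inv_rev, nonsing_inv_nonsing_inv _ hW, Matrix.mul_assoc,
    Matrix.sub_mul, Matrix.add_mul, mul_nonsing_inv _ hMsT, Matrix.mul_sub, Matrix.mul_add,
    ← Matrix.mul_assoc, nonsing_inv_mul _ hMs, Matrix.one_mul, Matrix.mul_one]

theorem one_sub_mul_one_sub_eq_one_sub_smoothX {S : Matrix (Fin n) (Fin ns) ℝ}
    {Ms : Matrix (Fin ns) (Fin ns) ℝ} (hMs : IsUnit Ms.det)
    (hW : IsUnit (Ms + Msᵀ - Sᵀ * A * S).det) :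
    (1 - S * Ms⁻¹ * Sᵀ * A) * (1 - S * (Msᵀ)⁻¹ * Sᵀ * A) = 1 - smoothX A S Ms := by
  rw [smoothX, inv_tMs hMs hW]
  simp only [Matrix.mul_sub, Matrix.sub_mul, Matrix.mul_add, Matrix.add_mul, Matrix.mul_one,
    Matrix.one_mul, Matrix.mul_assoc]
  abel

theorem charpoly_Etl {S : Matrix (Fin n) (Fin ns) ℝ} {Ms : Matrix (Fin ns) (Fin ns) ℝ}
    (hMs : IsUnit Ms.det) (hW : IsUnit (Ms + Msᵀ - Sᵀ * A * S).det)
    (P : Matrix (Fin n) (Fin nc) ℝ) :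
    (Etl A S P Ms).charpoly = ((1 - smoothX A S Ms) * (1 - proj A P)).charpoly := by
  rw [Etl, Matrix.mul_assoc, charpoly_mul_comm, Matrix.mul_assoc,
    one_sub_mul_one_sub_eq_one_sub_smoothX hMs hW, charpoly_mul_comm]

theorem X_pow_mul_charpoly_proj_add (hAc : IsUnit (Pᵀ * A * P).det)
    (S : Matrix (Fin n) (Fin ns) ℝ) (B : Matrix (Fin ns) (Fin ns) ℝ) :
    X ^ (nc + ns) * (proj A P + S * B * Sᵀ * A * (1 - proj A P)).charpoly =
      X ^ n * ((X - 1) ^ nc * (B * (Sᵀ * A * (1 - proj A P) * S)).charpoly) := by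
  have hPAP : (Pᵀ * A * P)⁻¹ * (Pᵀ * A) * P = 1 := by
    rw [Matrix.mul_assoc, nonsing_inv_mul _ hAc]
  have hBP : B * (Sᵀ * A * (1 - proj A P)) * P = 0 := by
    rw [Matrix.mul_assoc, Matrix.mul_assoc _ (1 - proj A P), one_sub_proj_mul_self hAc,
      Matrix.mul_zero, Matrix.mul_zero]
  have hmul := charpoly_mul_comm' (fromCols P S)
    (fromRows ((Pᵀ * A * P)⁻¹ * (Pᵀ * A)) (B * (Sᵀ * A * (1 - proj A P))))
  rw [fromCols_mul_fromRows, fromRows_mul_fromCols, hPAP, hBP, charpoly_fromBlocks_zero₂₁,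
    charpoly_one, ← proj_eq_mul] at hmul
  simpa only [Fintype.card_sum, Fintype.card_fin, Matrix.mul_assoc] using hmul

theorem roots_charpoly_proj_add (hAc : IsUnit (Pᵀ * A * P).det) (hP : P.rank = nc)
    {S : Matrix (Fin n) (Fin ns) ℝ} {B : Matrix (Fin ns) (Fin ns) ℝ} (hB : B.PosDef)
    (hK : (Sᵀ * A * (1 - proj A P) * S).PosSemidef)
    (hKrank : (Sᵀ * A * (1 - proj A P) * S).rank = n - nc) :
    (proj A P + S * B * Sᵀ * A * (1 - proj A P)).charpoly.roots =
      Multiset.replicate nc 1 +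
        (B * (Sᵀ * A * (1 - proj A P) * S)).charpoly.roots.filter (0 < ·) := by
  obtain ⟨H, hH, hHrank, hBH⟩ := hB.exists_posSemidef_charpoly_mul_eq hK
  have hY := hH.charpoly_eq_X_pow_mul_prod_pos_roots
  rw [← hBH, hHrank, hKrank, Fintype.card_fin] at hY
  set Q := (((B * (Sᵀ * A * (1 - proj A P) * S)).charpoly.roots.filter (0 < ·)).map (X - C ·)).prod
  have hnc : nc ≤ n := hP ▸ rank_le_height P
  have hns : n - nc ≤ ns := hKrank ▸ rank_le_width _
  suffices h : (proj A P + S * B * Sᵀ * A * (1 - proj A P)).charpoly = (X - C 1) ^ nc * Q by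
    rw [h, ← roots_multiset_prod_X_sub_C (Multiset.replicate nc 1 + _), Multiset.map_add,
      Multiset.prod_add, Multiset.map_replicate, Multiset.prod_replicate]
  refine (isRegular_X_pow (nc + ns)).left ?_
  dsimp only
  rw [X_pow_mul_charpoly_proj_add hAc, hY, show nc + ns = n + (ns - (n - nc)) by omega, C_1]
  ring

end TwoLevel

theorem spectrum_Etl_general {n ns nc : ℕ}
    (A : Matrix (Fin n) (Fin n) ℝ) (hA : A.PosDef)
    (S : Matrix (Fin n) (Fin ns) ℝ)
    (P : Matrix (Fin n) (Fin nc) ℝ) (hP : P.rank = nc)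
    (hSP : (fromCols S P).rank = n)
    (Ms : Matrix (Fin ns) (Fin ns) ℝ) (hMs : IsUnit Ms.det)
    (hMsA : (Ms + Msᵀ - Sᵀ * A * S).PosDef) :
    (Etl A S P Ms).charpoly.roots =
      Multiset.replicate nc 0 +
        ((((tMs Ms (Sᵀ * A * S))⁻¹ * (Sᵀ * A * (1 - proj A P) * S)).charpoly.roots.filter
          (fun x => 0 < x)).map (fun ν => 1 - ν)) := by
  have hAc : IsUnit (Pᵀ * A * P).det :=
    (hA.transpose_mul_mul_same (mulVec_injective_of_rank_eq_card P (by simpa))).det_pos.ne'.isUnit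
  have htM : (tMs Ms (Sᵀ * A * S)).PosDef := hMsA.inv.transpose_mul_mul_same
    (mulVec_injective_iff_isUnit.mpr ((isUnit_iff_isUnit_det _).mpr hMs))
  have hZ := roots_charpoly_proj_add hAc hP htM.inv
    (posSemidef_transpose_mul_one_sub_proj_mul hA hAc S)
    (rank_transpose_mul_one_sub_proj_mul hA hAc hP hSP)
  rw [charpoly_Etl hMs hMsA.det_pos.ne'.isUnit P,
    show (1 - smoothX A S Ms) * (1 - proj A P) = 1 - (proj A P + smoothX A S Ms * (1 - proj A P))
      by noncomm_ring, roots_charpoly_one_sub, smoothX, hZ]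
  simp

/-- Corollary: the spectrum of `E_TL` is `{0 (multiplicity n_c), 1 - ν_1, …, 1 - ν_{n-n_c}}`,
where the `ν_i` are the positive eigenvalues (with multiplicity) of
`M̃_s⁻¹ Sᵀ A (I - Π_A) S`. -/
theorem spectrum_Etl {n ns nc : ℕ}
    (A : Matrix (Fin n) (Fin n) ℝ) (hA : A.PosDef)
    (S : Matrix (Fin n) (Fin ns) ℝ) (hS : S.rank = ns)
    (P : Matrix (Fin n) (Fin nc) ℝ) (hP : P.rank = nc)
    (hns : ns < n) (hnc : nc < n) (hsum : n ≤ ns + nc)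
    (hSP : (fromCols S P).rank = n)
    (Ms : Matrix (Fin ns) (Fin ns) ℝ) (hMs : IsUnit Ms.det)
    (hMsA : (Ms + Msᵀ - Sᵀ * A * S).PosDef) :
    (Etl A S P Ms).charpoly.roots =
      Multiset.replicate nc 0 +
        ((((tMs Ms (Sᵀ * A * S))⁻¹ * (Sᵀ * A * (1 - proj A P) * S)).charpoly.roots.filter
          (fun x => 0 < x)).map (fun ν => 1 - ν)) :=
  spectrum_Etl_general A hA S P hP hSP Ms hMs hMsA
end

section
/- Let (μ_i, v_i), i = 1,…,n, be eigenpairs of S M̃_s^{-1} S^T A with μ_1 ≤ μ_2 ≤ ⋯ ≤ μ_n and the eigenvectors A-orthonormal (v_i^T A v_j = δ_{ij}). If the column space of P equals span{v_1, …, v_{n_c}}, then the lower bound is attained: ‖E_TL‖_A = 1 − μ_{n_c+1}. -/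
/-!
With `G = I - S M_s⁻¹ Sᵀ A` and its `A`-adjoint `G* = I - S M_s⁻ᵀ Sᵀ A`, idempotence of
`I - Π_A` gives `E_TL = F* F` for `F = (I - Π_A) G`, and `G G* = I - S M̃_s⁻¹ Sᵀ A`, so
`F F* = (I - Π_A)(I - S M̃_s⁻¹ Sᵀ A)(I - Π_A)`. When `Range P = span{v_1, …, v_{n_c}}`, every
factor is diagonal in the `A`-orthonormal eigenbasis `(v_i)`: `F F*` kills `v_1, …, v_{n_c}` and
scales the other `v_i` by `1 - μ_i ≤ 1 - μ_{n_c+1}`. The Rayleigh bound for `F F*` and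
Cauchy–Schwarz give `‖F* F w‖_A ≤ (1 - μ_{n_c+1}) ‖w‖_A`, with equality at `w = F* v_{n_c+1}`.
-/

open Matrix

namespace Matrix

theorem PosSemidef.isSymm {ι : Type*} {A : Matrix ι ι ℝ} (hA : A.PosSemidef) : A.IsSymm :=
  isHermitian_iff_isSymm.mp hA.isHermitian

variable {ι κ : Type*} [Fintype ι] [Fintype κ]

theorem mulVec_dotProduct_mulVec_mulVec (A : Matrix ι ι ℝ) (B : Matrix ι κ ℝ) (x y : κ → ℝ) :
    B *ᵥ x ⬝ᵥ A *ᵥ (B *ᵥ y) = x ⬝ᵥ (Bᵀ * A * B) *ᵥ y := by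
  rw [dotProduct_mulVec, ← vecMul_transpose, vecMul_vecMul, ← dotProduct_mulVec, mulVec_mulVec]

theorem dotProduct_mulVec_comm {A : Matrix ι ι ℝ} (hA : A.IsSymm) (x y : ι → ℝ) :
    x ⬝ᵥ A *ᵥ y = y ⬝ᵥ A *ᵥ x := by
  rw [dotProduct_mulVec, ← mulVec_transpose, hA.eq, dotProduct_comm]

theorem PosSemidef.dotProduct_mulVec_sq_le [DecidableEq ι] {A : Matrix ι ι ℝ}
    (hA : A.PosSemidef) (x y : ι → ℝ) :
    (x ⬝ᵥ A *ᵥ y) ^ 2 ≤ (x ⬝ᵥ A *ᵥ x) * (y ⬝ᵥ A *ᵥ y) := by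
  have hsymm : LinearMap.IsSymm (toBilin' A) :=
    ⟨fun x y => by simpa [toBilin'_apply'] using dotProduct_mulVec_comm hA.isSymm x y⟩
  simpa only [toBilin'_apply'] using
    (toBilin' A).apply_sq_le_of_symm
      (fun x => by simpa [toBilin'_apply'] using hA.dotProduct_mulVec_nonneg x) hsymm x y

theorem IsAdjointPair.symm {A B B' : Matrix ι ι ℝ} (hA : A.IsSymm) (h : IsAdjointPair A A B B') :
    IsAdjointPair A A B' B := by
  unfold IsAdjointPair at *
  simpa only [transpose_mul, transpose_transpose, hA.eq] using (congrArg transpose h).symm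

theorem IsAdjointPair.mul {A B B' C C' : Matrix ι ι ℝ} (hB : IsAdjointPair A A B B')
    (hC : IsAdjointPair A A C C') : IsAdjointPair A A (B * C) (C' * B') := by
  unfold IsAdjointPair at *
  rw [transpose_mul, Matrix.mul_assoc, hB, ← Matrix.mul_assoc, hC, Matrix.mul_assoc]

theorem IsAdjointPair.mulVec_dotProduct_mulVec_mulVec {A B B' : Matrix ι ι ℝ}
    (h : IsAdjointPair A A B B') (x : ι → ℝ) :
    B *ᵥ x ⬝ᵥ A *ᵥ (B *ᵥ x) = x ⬝ᵥ A *ᵥ ((B' * B) *ᵥ x) := by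
  rw [Matrix.mulVec_dotProduct_mulVec_mulVec, show Bᵀ * A = A * B' from h, Matrix.mul_assoc,
    ← mulVec_mulVec]

theorem isAdjointPair_one_sub [DecidableEq ι] {A : Matrix ι ι ℝ} (hA : A.IsSymm)
    (B : Matrix ι κ ℝ) (K : Matrix κ κ ℝ) :
    IsAdjointPair A A (1 - B * K * Bᵀ * A) (1 - B * Kᵀ * Bᵀ * A) := by
  unfold IsAdjointPair
  simp only [transpose_sub, transpose_one, transpose_mul, transpose_transpose, hA.eq,
    Matrix.sub_mul, Matrix.mul_sub, Matrix.one_mul, Matrix.mul_one, Matrix.mul_assoc]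

theorem dotProduct_mulVec_mulVec_le_of_orthonormal_eigenbasis [DecidableEq ι] {A W : Matrix ι ι ℝ}
    {v : ι → ι → ℝ} (hv : ∀ i j, v i ⬝ᵥ A *ᵥ v j = if i = j then 1 else 0)
    {δ : ι → ℝ} (hW : ∀ i, W *ᵥ v i = δ i • v i) {t : ℝ} (hδ : ∀ i, δ i ≤ t) (y : ι → ℝ) :
    y ⬝ᵥ A *ᵥ (W *ᵥ y) ≤ t * (y ⬝ᵥ A *ᵥ y) := by
  set V : Matrix ι ι ℝ := (of v)ᵀ
  have hVcol : ∀ i, V *ᵥ Pi.single i 1 = v i := fun i => by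
    rw [mulVec_single_one]; rfl
  have hVAV : Vᵀ * A * V = 1 := by
    ext i j
    have : (Vᵀ * A * V) i j = V *ᵥ Pi.single i 1 ⬝ᵥ A *ᵥ (V *ᵥ Pi.single j 1) := by
      rw [mulVec_dotProduct_mulVec_mulVec]; simp
    rw [this, hVcol, hVcol, hv, one_apply]
  have hWV : W * V = V * diagonal δ := ext_col fun i => by
    rw [← mulVec_single_one, ← mulVec_single_one, ← mulVec_mulVec, ← mulVec_mulVec, hVcol, hW,
      diagonal_mulVec_single, ← smul_eq_mul, Pi.single_smul', mulVec_smul, hVcol]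
  obtain ⟨c, rfl⟩ : ∃ c, y = V *ᵥ c :=
    ⟨(Vᵀ * A) *ᵥ y, by rw [mulVec_mulVec, mul_eq_one_comm.mp hVAV, one_mulVec]⟩
  have hquad : V *ᵥ c ⬝ᵥ A *ᵥ (V *ᵥ c) = ∑ i, c i * c i := by
    rw [mulVec_dotProduct_mulVec_mulVec, hVAV, one_mulVec]; rfl
  have hWquad : V *ᵥ c ⬝ᵥ A *ᵥ (W *ᵥ (V *ᵥ c)) = ∑ i, δ i * (c i * c i) := by
    rw [mulVec_mulVec (M := W), hWV, ← mulVec_mulVec, mulVec_dotProduct_mulVec_mulVec, hVAV,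
      one_mulVec]
    simp only [dotProduct, mulVec_diagonal]
    exact Finset.sum_congr rfl fun i _ => by ring
  rw [hquad, hWquad, Finset.mul_sum]
  exact Finset.sum_le_sum fun i _ => mul_le_mul_of_nonneg_right (hδ i) (mul_self_nonneg _)

end Matrix

section EnergyNorm

variable {n : ℕ} {A : Matrix (Fin n) (Fin n) ℝ}

theorem eNorm_sq (hA : A.PosSemidef) (x : Fin n → ℝ) : eNorm A x ^ 2 = x ⬝ᵥ A *ᵥ x :=
  Real.sq_sqrt (by simpa using hA.dotProduct_mulVec_nonneg x)

theorem eNorm_pos (hA : A.PosDef) {x : Fin n → ℝ} (hx : x ≠ 0) : 0 < eNorm A x :=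
  Real.sqrt_pos.2 (by simpa using hA.dotProduct_mulVec_pos hx)

theorem eNorm_smul (c : ℝ) (x : Fin n → ℝ) : eNorm A (c • x) = |c| * eNorm A x := by
  rw [eNorm, eNorm, mulVec_smul, dotProduct_smul, smul_dotProduct, smul_smul, smul_eq_mul,
    ← sq, Real.sqrt_mul (sq_nonneg c), Real.sqrt_sq_eq_abs]

theorem dotProduct_mulVec_le_eNorm_mul_eNorm (hA : A.PosSemidef) (x y : Fin n → ℝ) :
    x ⬝ᵥ A *ᵥ y ≤ eNorm A x * eNorm A y := by
  rw [eNorm, eNorm, ← Real.sqrt_mul (by simpa using hA.dotProduct_mulVec_nonneg x)]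
  exact (le_abs_self _).trans (Real.abs_le_sqrt (hA.dotProduct_mulVec_sq_le x y))

theorem aNorm_eq_of_forall_le {B : Matrix (Fin n) (Fin n) ℝ} {t : ℝ} (hA : A.PosDef)
    (hle : ∀ w, eNorm A (B *ᵥ w) ≤ t * eNorm A w) {w₀ : Fin n → ℝ} (hw₀ : w₀ ≠ 0)
    (heq : eNorm A (B *ᵥ w₀) = t * eNorm A w₀) : aNorm A B = t := by
  have hub : ∀ r ∈ {r : ℝ | ∃ w, w ≠ 0 ∧ r = eNorm A (B *ᵥ w) / eNorm A w}, r ≤ t := by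
    rintro r ⟨w, hw, rfl⟩
    exact (div_le_iff₀ (eNorm_pos hA hw)).2 (hle w)
  have hmem : t ∈ {r : ℝ | ∃ w, w ≠ 0 ∧ r = eNorm A (B *ᵥ w) / eNorm A w} :=
    ⟨w₀, hw₀, by rw [heq, mul_div_cancel_right₀ _ (eNorm_pos hA hw₀).ne']⟩
  exact le_antisymm (csSup_le ⟨t, hmem⟩ hub) (le_csSup ⟨t, hub⟩ hmem)

end EnergyNorm

namespace Matrix.IsAdjointPair

variable {n : ℕ} {A B B' : Matrix (Fin n) (Fin n) ℝ}

theorem eNorm_mul_mulVec_le (hA : A.PosSemidef) (h : IsAdjointPair A A B B') {t : ℝ}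
    (ht : 0 ≤ t)
    (hB' : ∀ y, B' *ᵥ y ⬝ᵥ A *ᵥ (B' *ᵥ y) ≤ t * (y ⬝ᵥ A *ᵥ y)) (w : Fin n → ℝ) :
    eNorm A ((B' * B) *ᵥ w) ≤ t * eNorm A w := by
  set e := (B' * B) *ᵥ w
  have hBw : e = B' *ᵥ (B *ᵥ w) := (mulVec_mulVec _ _ _).symm
  have key : eNorm A e ^ 2 ≤ t * eNorm A w * eNorm A e := calc
    eNorm A e ^ 2 ≤ t * (B *ᵥ w ⬝ᵥ A *ᵥ (B *ᵥ w)) := by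
      rw [eNorm_sq hA, hBw]; exact hB' _
    _ = t * (w ⬝ᵥ A *ᵥ e) := by rw [h.mulVec_dotProduct_mulVec_mulVec]
    _ ≤ t * (eNorm A w * eNorm A e) :=
      mul_le_mul_of_nonneg_left (dotProduct_mulVec_le_eNorm_mul_eNorm hA w e) ht
    _ = t * eNorm A w * eNorm A e := by ring
  have he0 : 0 ≤ eNorm A e := Real.sqrt_nonneg _
  have hw0 : 0 ≤ t * eNorm A w := mul_nonneg ht (Real.sqrt_nonneg _)
  nlinarith

theorem mulVec_dotProduct_mulVec_eq_of_eigen (hA : A.IsSymm) (h : IsAdjointPair A A B B')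
    {v : Fin n → ℝ} (hv : v ⬝ᵥ A *ᵥ v = 1) {δ : ℝ} (hδ : (B * B') *ᵥ v = δ • v) :
    B' *ᵥ v ⬝ᵥ A *ᵥ (B' *ᵥ v) = δ := by
  rw [(h.symm hA).mulVec_dotProduct_mulVec_mulVec, hδ, mulVec_smul, dotProduct_smul, hv,
    smul_eq_mul, mul_one]

theorem nonneg_of_eigen (hA : A.PosSemidef) (h : IsAdjointPair A A B B')
    {v : Fin n → ℝ} (hv : v ⬝ᵥ A *ᵥ v = 1) {δ : ℝ} (hδ : (B * B') *ᵥ v = δ • v) : 0 ≤ δ := by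
  rw [← h.mulVec_dotProduct_mulVec_eq_of_eigen hA.isSymm hv hδ]
  simpa using hA.dotProduct_mulVec_nonneg (B' *ᵥ v)

theorem aNorm_mul_eq (hA : A.PosDef) (h : IsAdjointPair A A B B') {v : Fin n → Fin n → ℝ}
    (hv : ∀ i j, v i ⬝ᵥ A *ᵥ v j = if i = j then 1 else 0) {δ : Fin n → ℝ}
    (heig : ∀ i, (B * B') *ᵥ v i = δ i • v i) {j : Fin n} (hj : ∀ i, δ i ≤ δ j) :
    aNorm A (B' * B) = δ j := by
  have hAs : A.IsSymm := hA.posSemidef.isSymm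
  have hvj : v j ⬝ᵥ A *ᵥ v j = 1 := by simpa using hv j j
  have hδj : 0 ≤ δ j := h.nonneg_of_eigen hA.posSemidef hvj (heig j)
  have hle := h.eNorm_mul_mulVec_le hA.posSemidef hδj fun y => by
    rw [(h.symm hAs).mulVec_dotProduct_mulVec_mulVec]
    exact dotProduct_mulVec_mulVec_le_of_orthonormal_eigenbasis hv heig hj y
  rcases hδj.eq_or_lt with hzero | hpos
  · have hvj0 : v j ≠ 0 := fun h0 => by simp [h0] at hvj
    refine aNorm_eq_of_forall_le hA hle hvj0 (le_antisymm (hle _) ?_)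
    rw [← hzero, zero_mul]
    exact Real.sqrt_nonneg _
  · have hw₀ : B' *ᵥ v j ⬝ᵥ A *ᵥ (B' *ᵥ v j) = δ j :=
      h.mulVec_dotProduct_mulVec_eq_of_eigen hAs hvj (heig j)
    refine aNorm_eq_of_forall_le hA hle (w₀ := B' *ᵥ v j) (fun h0 => by simp_all) ?_
    rw [mulVec_mulVec, Matrix.mul_assoc, ← mulVec_mulVec, heig, mulVec_smul, eNorm_smul,
      abs_of_nonneg hδj]

end Matrix.IsAdjointPair

theorem Matrix.PosDef.transpose_mul_mul_of_rank_eq_card {ι κ : Type*} [Fintype ι] [Fintype κ]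
    {A : Matrix ι ι ℝ} (hA : A.PosDef) {P : Matrix ι κ ℝ} (hP : P.rank = Fintype.card κ) :
    (Pᵀ * A * P).PosDef := by
  have hinj : Function.Injective P.mulVec := by
    rwa [mulVec_injective_iff, linearIndependent_iff_card_eq_finrank_span, Set.finrank,
      ← rank_eq_finrank_span_cols, eq_comm]
  simpa using hA.conjTranspose_mul_mul_same hinj

section CoarseCorrection

variable {n nc : ℕ} {A : Matrix (Fin n) (Fin n) ℝ} {P : Matrix (Fin n) (Fin nc) ℝ}

theorem proj_mul_self_right (hN : IsUnit (Pᵀ * A * P).det) : proj A P * P = P := by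
  rw [proj, Matrix.mul_assoc, Matrix.mul_assoc (P * _), Matrix.mul_assoc P,
    ← Matrix.mul_assoc Pᵀ, nonsing_inv_mul _ hN, Matrix.mul_one]

theorem proj_mul_proj (hN : IsUnit (Pᵀ * A * P).det) : proj A P * proj A P = proj A P := by
  calc proj A P * proj A P = proj A P * P * ((Pᵀ * A * P)⁻¹ * Pᵀ * A) := by
        nth_rewrite 2 [proj]; simp only [Matrix.mul_assoc]
    _ = proj A P := by rw [proj_mul_self_right hN, proj]; simp only [Matrix.mul_assoc]

theorem one_sub_proj_mul_one_sub_proj (hN : IsUnit (Pᵀ * A * P).det) :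
    (1 - proj A P) * (1 - proj A P) = 1 - proj A P := by
  rw [Matrix.mul_sub, Matrix.sub_mul, Matrix.sub_mul, proj_mul_proj hN]
  simp

theorem isAdjointPair_one_sub_proj (hA : A.IsSymm) :
    IsAdjointPair A A (1 - proj A P) (1 - proj A P) := by
  have hN : ((Pᵀ * A * P)⁻¹)ᵀ = (Pᵀ * A * P)⁻¹ := by
    rw [transpose_nonsing_inv, transpose_mul, transpose_mul, transpose_transpose, hA.eq,
      Matrix.mul_assoc]
  rw [proj]
  simpa only [hN] using isAdjointPair_one_sub hA P (Pᵀ * A * P)⁻¹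

theorem proj_mulVec_of_mem_range (hN : IsUnit (Pᵀ * A * P).det) {x : Fin n → ℝ}
    (hx : x ∈ LinearMap.range P.mulVecLin) : proj A P *ᵥ x = x := by
  obtain ⟨c, rfl⟩ := hx
  rw [mulVecLin_apply, mulVec_mulVec, proj_mul_self_right hN]

theorem proj_mulVec_eq_zero {x : Fin n → ℝ}
    (hx : ∀ u ∈ LinearMap.range P.mulVecLin, u ⬝ᵥ A *ᵥ x = 0) : proj A P *ᵥ x = 0 := by
  have hPx : Pᵀ *ᵥ (A *ᵥ x) = 0 := by
    ext j
    rw [Pi.zero_apply, ← single_one_dotProduct j (Pᵀ *ᵥ (A *ᵥ x)), dotProduct_mulVec,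
      vecMul_transpose]
    exact hx _ ⟨_, rfl⟩
  rw [proj, ← mulVec_mulVec, ← mulVec_mulVec, hPx, mulVec_zero]

theorem one_sub_proj_mulVec_of_range_eq_span (hN : IsUnit (Pᵀ * A * P).det) (hnc : nc ≤ n)
    {v : Fin n → Fin n → ℝ} (horth : ∀ i j, v i ⬝ᵥ A *ᵥ v j = if i = j then 1 else 0)
    (hspan : LinearMap.range P.mulVecLin =
      Submodule.span ℝ (Set.range fun i : Fin nc => v (Fin.castLE hnc i)))
    (i : Fin n) : (1 - proj A P) *ᵥ v i = (if (i : ℕ) < nc then 0 else 1) • v i := by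
  rw [sub_mulVec, one_mulVec]
  split_ifs with hi
  · rw [proj_mulVec_of_mem_range hN (hspan ▸ Submodule.subset_span ⟨⟨i, hi⟩, rfl⟩), sub_self,
      zero_smul]
  · rw [proj_mulVec_eq_zero, sub_zero, one_smul]
    intro u hu
    obtain ⟨c, rfl⟩ := (Submodule.mem_span_range_iff_exists_fun ℝ).mp (hspan ▸ hu)
    simp only [sum_dotProduct, smul_dotProduct, horth, smul_eq_mul]
    refine Finset.sum_eq_zero fun k _ => ?_
    rw [if_neg fun h => hi (by simp [← h]), mul_zero]

end CoarseCorrection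

section TwoLevel

variable {n ns nc : ℕ} {A : Matrix (Fin n) (Fin n) ℝ} {S : Matrix (Fin n) (Fin ns) ℝ}
  {P : Matrix (Fin n) (Fin nc) ℝ} {Ms : Matrix (Fin ns) (Fin ns) ℝ}

theorem isAdjointPair_smoother (hA : A.IsSymm) :
    IsAdjointPair A A (1 - S * Ms⁻¹ * Sᵀ * A) (1 - S * Msᵀ⁻¹ * Sᵀ * A) := by
  simpa only [transpose_nonsing_inv] using isAdjointPair_one_sub hA S Ms⁻¹

theorem smoother_mul_smoother_eq (hMs : IsUnit Ms.det)
    (hR : IsUnit (Ms + Msᵀ - Sᵀ * A * S).det) :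
    (1 - S * Ms⁻¹ * Sᵀ * A) * (1 - S * Msᵀ⁻¹ * Sᵀ * A) = 1 - smoothX A S Ms := by
  have hMsT : IsUnit Msᵀ.det := by rwa [det_transpose]
  have hinv : (tMs Ms (Sᵀ * A * S))⁻¹ = Msᵀ⁻¹ + Ms⁻¹ - Ms⁻¹ * (Sᵀ * A * S) * Msᵀ⁻¹ := by
    rw [tMs, Matrix.mul_inv_rev, Matrix.mul_inv_rev, nonsing_inv_nonsing_inv _ hR,
      Matrix.sub_mul, Matrix.add_mul, mul_nonsing_inv _ hMsT, Matrix.mul_sub, Matrix.mul_add,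
      ← Matrix.mul_assoc Ms⁻¹ Ms, nonsing_inv_mul _ hMs, Matrix.one_mul, Matrix.mul_one,
      Matrix.mul_assoc Ms⁻¹]
  rw [smoothX, hinv]
  simp only [Matrix.mul_add, Matrix.add_mul, Matrix.mul_sub, Matrix.sub_mul, Matrix.mul_one,
    Matrix.one_mul, Matrix.mul_assoc]
  abel

theorem Etl_eq_adjoint_mul (hN : IsUnit (Pᵀ * A * P).det) :
    Etl A S P Ms = ((1 - S * Msᵀ⁻¹ * Sᵀ * A) * (1 - proj A P)) *
      ((1 - proj A P) * (1 - S * Ms⁻¹ * Sᵀ * A)) := by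
  rw [Matrix.mul_assoc, ← Matrix.mul_assoc (1 - proj A P), one_sub_proj_mul_one_sub_proj hN,
    ← Matrix.mul_assoc, Etl]

theorem coarse_smoother_mul_adjoint_eq (hMs : IsUnit Ms.det)
    (hR : IsUnit (Ms + Msᵀ - Sᵀ * A * S).det) :
    ((1 - proj A P) * (1 - S * Ms⁻¹ * Sᵀ * A)) * ((1 - S * Msᵀ⁻¹ * Sᵀ * A) * (1 - proj A P)) =
      (1 - proj A P) * (1 - smoothX A S Ms) * (1 - proj A P) := by
  rw [Matrix.mul_assoc, ← Matrix.mul_assoc (1 - S * Ms⁻¹ * Sᵀ * A),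
    smoother_mul_smoother_eq hMs hR, Matrix.mul_assoc]

end TwoLevel

theorem optimal_interpolation_equality_general {n ns nc : ℕ}
    (A : Matrix (Fin n) (Fin n) ℝ) (hA : A.PosDef)
    (S : Matrix (Fin n) (Fin ns) ℝ)
    (P : Matrix (Fin n) (Fin nc) ℝ) (hP : P.rank = nc)
    (hnc : nc < n)
    (Ms : Matrix (Fin ns) (Fin ns) ℝ) (hMs : IsUnit Ms.det)
    (hMsA : (Ms + Msᵀ - Sᵀ * A * S).PosDef)
    (μ : Fin n → ℝ) (v : Fin n → Fin n → ℝ)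
    (hmono : Monotone μ)
    (heig : ∀ i, (smoothX A S Ms).mulVec (v i) = μ i • v i)
    (horth : ∀ i j, v i ⬝ᵥ A.mulVec (v j) = if i = j then 1 else 0)
    (hspan : LinearMap.range P.mulVecLin =
      Submodule.span ℝ (Set.range fun i : Fin nc => v (Fin.castLE hnc.le i))) :
    aNorm A (Etl A S P Ms) = 1 - μ ⟨nc, hnc⟩ := by
  have hAs : A.IsSymm := hA.posSemidef.isSymm
  have hN : IsUnit (Pᵀ * A * P).det :=
    (hA.transpose_mul_mul_of_rank_eq_card (by rwa [Fintype.card_fin])).isUnit.map detMonoidHom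
  set F := (1 - proj A P) * (1 - S * Ms⁻¹ * Sᵀ * A)
  set F' := (1 - S * Msᵀ⁻¹ * Sᵀ * A) * (1 - proj A P)
  have hadj : IsAdjointPair A A F F' :=
    (isAdjointPair_one_sub_proj hAs).mul (isAdjointPair_smoother hAs)
  have hQ := one_sub_proj_mulVec_of_range_eq_span hN hnc.le horth hspan
  have hX : ∀ i, (1 - smoothX A S Ms) *ᵥ v i = (1 - μ i) • v i := fun i => by
    rw [sub_mulVec, one_mulVec, heig, sub_smul, one_smul]
  set δ : Fin n → ℝ := fun i => if (i : ℕ) < nc then 0 else 1 - μ i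
  have hFF : ∀ i, (F * F') *ᵥ v i = δ i • v i := fun i => by
    rw [show F * F' = _ from coarse_smoother_mul_adjoint_eq hMs (hMsA.isUnit.map detMonoidHom),
      ← mulVec_mulVec, ← mulVec_mulVec]
    simp only [hQ, hX, mulVec_smul]
    split_ifs <;> simp [δ, *]
  have hlast : 0 ≤ δ ⟨nc, hnc⟩ :=
    hadj.nonneg_of_eigen hA.posSemidef (by simpa using horth ⟨nc, hnc⟩ ⟨nc, hnc⟩) (hFF _)
  have hδ : ∀ i, δ i ≤ δ ⟨nc, hnc⟩ := fun i => by
    by_cases hi : (i : ℕ) < nc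
    · rwa [show δ i = 0 from if_pos hi]
    · have := hmono (show (⟨nc, hnc⟩ : Fin n) ≤ i from not_lt.mp hi)
      simp only [δ, hi, if_false, lt_irrefl]
      linarith
  rw [Etl_eq_adjoint_mul hN]
  exact (hadj.aNorm_mul_eq hA horth hFF hδ).trans (if_neg (lt_irrefl nc))

/-- Optimal interpolation: if `Range(P) = span{v_1, …, v_{n_c}}`, where `(μ_i, v_i)` are
`A`-orthonormal eigenpairs of `S M̃_s⁻¹ Sᵀ A` with `μ_1 ≤ ⋯ ≤ μ_n`, then
`‖E_TL‖_A = 1 - μ_{n_c+1}`. -/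
theorem optimal_interpolation_equality {n ns nc : ℕ}
    (A : Matrix (Fin n) (Fin n) ℝ) (hA : A.PosDef)
    (S : Matrix (Fin n) (Fin ns) ℝ) (hS : S.rank = ns)
    (P : Matrix (Fin n) (Fin nc) ℝ) (hP : P.rank = nc)
    (hns : ns < n) (hnc : nc < n) (hsum : n ≤ ns + nc)
    (hSP : (fromCols S P).rank = n)
    (Ms : Matrix (Fin ns) (Fin ns) ℝ) (hMs : IsUnit Ms.det)
    (hMsA : (Ms + Msᵀ - Sᵀ * A * S).PosDef)
    (μ : Fin n → ℝ) (v : Fin n → Fin n → ℝ)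
    (hmono : Monotone μ)
    (heig : ∀ i, (smoothX A S Ms).mulVec (v i) = μ i • v i)
    (horth : ∀ i j, v i ⬝ᵥ A.mulVec (v j) = if i = j then 1 else 0)
    (hspan : LinearMap.range P.mulVecLin =
      Submodule.span ℝ (Set.range fun i : Fin nc => v (Fin.castLE hnc.le i))) :
    aNorm A (Etl A S P Ms) = 1 - μ ⟨nc, hnc⟩ :=
  optimal_interpolation_equality_general A hA S P hP hnc Ms hMs hMsA μ v hmono heig horth hspan
end
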